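/- arXiv:1510.06077 — 4 statements merged into one kernel-verified Lean document; each statement's English description precedes it below -/
import Mathlib

section
/- Let U : (0,∞) → ℝ be continuously differentiable with 0 < U(s) < 1 for all s > 0, U(s) → 0 as s → 0⁺, and suppose U satisfies the integral equation U(s)^2 + U(s) = (2/s) ∫₀^s U(r) dr for all s > 0. Then there is a constant C > 0 such that U(s)/(1-U(s))^3 = C·s for all s > 0. -/
open Filter Set Topology intervalIntegral

/-! Differentiating `s (U² + U) = 2 ∫₀ˢ U` gives `s U' (2U + 1) = U - U²`, i.e.
`1/s = U'/U + 3U'/(1 - U)` once `U(1 - U)` is divided out. Hence `U / ((1 - U)³ s)` has zero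
derivative on `(0, ∞)` and is a constant, positive because `0 < U < 1`. -/

open MeasureTheory in
theorem intervalIntegrable_of_continuousOn_Ioc_of_norm_le {E : Type*} [NormedAddCommGroup E]
    {f : ℝ → E} {a b M : ℝ} (hab : a ≤ b) (hf : ContinuousOn f (Ioc a b))
    (hM : ∀ x ∈ Ioc a b, ‖f x‖ ≤ M) : IntervalIntegrable f volume a b := by
  rw [intervalIntegrable_iff_integrableOn_Ioc_of_le hab]
  refine Integrable.mono' (integrableOn_const (C := M) measure_Ioc_lt_top.ne)
    (hf.aestronglyMeasurable measurableSet_Ioc) ?_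
  filter_upwards [ae_restrict_mem measurableSet_Ioc] with x hx using hM x hx

theorem mul_deriv_mul_eq_of_mul_eq_integral {U : ℝ → ℝ} {u s : ℝ}
    (hint : IntervalIntegrable U MeasureTheory.volume 0 s)
    (hmeas : StronglyMeasurableAtFilter U (𝓝 s)) (hU : HasDerivAt U u s)
    (heq : ∀ᶠ t in 𝓝 s, t * (U t ^ 2 + U t) = 2 * ∫ r in (0:ℝ)..t, U r) :
    s * u * (2 * U s + 1) = U s - U s ^ 2 := by
  have hlhs : HasDerivAt (fun t => t * (U t ^ 2 + U t))
      (1 * (U s ^ 2 + U s) + s * (↑(2 : ℕ) * U s ^ (2 - 1) * u + u)) s :=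
    (hasDerivAt_id s).mul ((hU.pow 2).add hU)
  have hrhs : HasDerivAt (fun t => t * (U t ^ 2 + U t)) (2 * U s) s :=
    ((integral_hasDerivAt_right hint hmeas hU.continuousAt).const_mul 2).congr_of_eventuallyEq heq
  have := hlhs.unique hrhs
  push_cast at this
  linear_combination this

noncomputable def firstIntegral (U : ℝ → ℝ) (s : ℝ) : ℝ := U s / ((1 - U s) ^ 3 * s)

theorem hasDerivAt_firstIntegral {U : ℝ → ℝ} {u s : ℝ} (hU : HasDerivAt U u s) (hs : s ≠ 0)
    (hU1 : U s ≠ 1) (hode : s * u * (2 * U s + 1) = U s - U s ^ 2) :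
    HasDerivAt (firstIntegral U) 0 s := by
  have h1U : 1 - U s ≠ 0 := sub_ne_zero.mpr (Ne.symm hU1)
  have hden : HasDerivAt (fun t => (1 - U t) ^ 3 * t)
      (↑(3 : ℕ) * (1 - U s) ^ (3 - 1) * (0 - u) * s + (1 - U s) ^ 3 * 1) s :=
    (((hasDerivAt_const s 1).sub hU).pow 3).mul (hasDerivAt_id s)
  refine (hU.div hden (by positivity)).congr_deriv ?_
  push_cast
  rw [div_eq_zero_iff]
  left
  linear_combination (1 - U s) ^ 2 * hode

theorem stmt1_general (U : ℝ → ℝ)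
    (hC1 : ContDiffOn ℝ 1 U (Set.Ioi 0))
    (hbd : ∀ s : ℝ, 0 < s → 0 < U s ∧ U s < 1)
    (heq : ∀ s : ℝ, 0 < s → U s ^ 2 + U s = (2 / s) * ∫ r in (0:ℝ)..s, U r) :
    ∃ C : ℝ, 0 < C ∧ ∀ s : ℝ, 0 < s → U s / (1 - U s) ^ 3 = C * s := by
  have hcont : ContinuousOn U (Ioi 0) := hC1.continuousOn
  have hderiv : ∀ s > 0, HasDerivAt U (deriv U s) s := fun s hs =>
    ((hC1.differentiableOn one_ne_zero).differentiableAt (Ioi_mem_nhds hs)).hasDerivAt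
  have hode : ∀ s > 0, s * deriv U s * (2 * U s + 1) = U s - U s ^ 2 := by
    intro s hs
    refine mul_deriv_mul_eq_of_mul_eq_integral ?_
      (hcont.stronglyMeasurableAtFilter isOpen_Ioi s hs) (hderiv s hs) ?_
    · refine intervalIntegrable_of_continuousOn_Ioc_of_norm_le (M := 1) hs.le
        (hcont.mono Ioc_subset_Ioi_self) fun x hx => ?_
      rw [Real.norm_of_nonneg (hbd x hx.1).1.le]
      exact (hbd x hx.1).2.le
    · filter_upwards [Ioi_mem_nhds hs] with t ht
      rw [heq t ht]
      field_simp [(mem_Ioi.mp ht).ne']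
  have hG : ∀ s > 0, HasDerivAt (firstIntegral U) 0 s := fun s hs =>
    hasDerivAt_firstIntegral (hderiv s hs) hs.ne' (hbd s hs).2.ne (hode s hs)
  have hconst : ∀ s > 0, firstIntegral U s = firstIntegral U 1 := fun s hs =>
    isOpen_Ioi.is_const_of_deriv_eq_zero isPreconnected_Ioi
      (fun x hx => (hG x hx).differentiableAt.differentiableWithinAt)
      (fun x hx => (hG x hx).deriv) hs (mem_Ioi.mpr one_pos)
  refine ⟨firstIntegral U 1, ?_, fun s hs => ?_⟩
  · obtain ⟨hU0, hU1⟩ := hbd 1 one_pos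
    exact div_pos hU0 (mul_pos (pow_pos (sub_pos.mpr hU1) 3) one_pos)
  · have h1U : 0 < 1 - U s := by linarith [hbd s hs]
    rw [← hconst s hs, firstIntegral]
    field_simp

/-- If `U` is `C¹` on `(0,∞)`, with `0 < U < 1`, `U(0⁺) = 0`, and satisfies the integral
equation `U(s)² + U(s) = (2/s) ∫₀ˢ U(r) dr`, then `U(s)/(1-U(s))³ = C s` for some `C > 0`. -/
theorem stmt1 (U : ℝ → ℝ)
    (hC1 : ContDiffOn ℝ 1 U (Set.Ioi 0))
    (hbd : ∀ s : ℝ, 0 < s → 0 < U s ∧ U s < 1)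
    (hlim : Tendsto U (𝓝[>] (0 : ℝ)) (𝓝 0))
    (heq : ∀ s : ℝ, 0 < s → U s ^ 2 + U s = (2 / s) * ∫ r in (0:ℝ)..s, U r) :
    ∃ C : ℝ, 0 < C ∧ ∀ s : ℝ, 0 < s → U s / (1 - U s) ^ 3 = C * s :=
  stmt1_general U hC1 hbd heq
end

section
/- Define U⋆(s) = (1/√s)·( ((√(s+s₀)+√s)/2)^{1/3} − ((√(s+s₀)−√s)/2)^{1/3} )³ with s₀ = 4/27. Then for all s > 0, U⋆(s)/(1 − U⋆(s))³ = s. -/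
open Real

/-!
With `S = √s`, the bracket `d` in `U⋆` is Cardano's root of `d³ + d = S`, so `U⋆ = d³ / S` gives
`1 - U⋆ = d / S` and hence `U⋆ / (1 - U⋆)³ = (S - d) S² / d³ = S²`.
-/

theorem cardano_depressed_cubic {p q x y : ℝ} (hp : 0 ≤ p) (hx : 0 ≤ x) (hy : 0 ≤ y)
    (hsub : x - y = q) (hmul : x * y = (p / 3) ^ 3) :
    (x ^ ((1 : ℝ) / 3) - y ^ ((1 : ℝ) / 3)) ^ 3 + p * (x ^ ((1 : ℝ) / 3) - y ^ ((1 : ℝ) / 3))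
      = q := by
  set a := x ^ ((1 : ℝ) / 3)
  set b := y ^ ((1 : ℝ) / 3)
  have hcube : ∀ {t : ℝ}, 0 ≤ t → (t ^ ((1 : ℝ) / 3)) ^ 3 = t := fun ht => by
    simpa using rpow_inv_natCast_pow ht three_ne_zero
  have hab : a * b = p / 3 := by
    refine (pow_left_inj₀ (by positivity) (by positivity) three_ne_zero).mp ?_
    rw [mul_pow, hcube hx, hcube hy, hmul]
  calc (a - b) ^ 3 + p * (a - b) = a ^ 3 - b ^ 3 - 3 * (a * b - p / 3) * (a - b) := by ring
    _ = q := by rw [hcube hx, hcube hy, hab, ← hsub]; ring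

theorem div_one_sub_pow_three_of_pow_three_add_self {S d : ℝ} (hS : 0 < S)
    (hd : d ^ 3 + d = S) :
    (1 / S * d ^ 3) / (1 - 1 / S * d ^ 3) ^ 3 = S ^ 2 := by
  have hd_pos : 0 < d := by
    by_contra! h
    nlinarith [Odd.pow_nonpos (n := 3) ⟨1, rfl⟩ h]
  have h_one_sub : 1 - 1 / S * d ^ 3 = d / S := by
    field_simp
    linarith
  rw [h_one_sub, div_pow]
  field_simp

/-- The explicit formula
`U⋆(s) = (1/√s) ((((√(s+4/27)+√s)/2)^(1/3) - ((√(s+4/27)-√s)/2)^(1/3))³`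
satisfies `U⋆(s)/(1-U⋆(s))³ = s` for all `s > 0`. -/
theorem stmt2 :
    ∀ s : ℝ, 0 < s →
      letI s₀ : ℝ := 4 / 27
      letI U : ℝ :=
        (1 / Real.sqrt s) *
          (((Real.sqrt (s + s₀) + Real.sqrt s) / 2) ^ ((1:ℝ)/3) -
            ((Real.sqrt (s + s₀) - Real.sqrt s) / 2) ^ ((1:ℝ)/3)) ^ 3
      U / (1 - U) ^ 3 = s := by
  intro s hs
  have hS_pos : 0 < √s := sqrt_pos.mpr hs
  have hS_le : √s ≤ √(s + 4 / 27) := sqrt_le_sqrt (by linarith)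
  have hcardano := cardano_depressed_cubic (p := 1) (q := √s)
    (x := (√(s + 4 / 27) + √s) / 2) (y := (√(s + 4 / 27) - √s) / 2)
    zero_le_one (by positivity) (by linarith) (by ring) (by
      linear_combination (sq_sqrt (by positivity : (0 : ℝ) ≤ s + 4 / 27) - sq_sqrt hs.le) / 4)
  rw [one_mul] at hcardano
  show _ = s
  rw [div_one_sub_pow_three_of_pow_three_add_self hS_pos hcardano, sq_sqrt hs.le]
end

section
/- There is no finite nonzero measure F on (0,∞) whose Bernstein transform Ŭ(s) = ∫(1 − e^{−sx}) F(dx) satisfies Ŭ(s) = (1/s)·∫ (e^{−sx} − 1 + sx)/x · F(dx) for all s > 0. -/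
/-!
For `x > 0` the integrands compare strictly: `(e^{-x} - 1 + x) / x < 1 - e^{-x}` is equivalent
to `(1 + x) e^{-x} < 1`, i.e. to `1 + x < e^x`. Hence for a nonzero finite measure on `(0,∞)`
the right-hand side is strictly smaller than the left-hand side already at `s = 1`.
-/

open MeasureTheory Real

namespace MeasureTheory

variable {α : Type*} [MeasurableSpace α] {μ : Measure α} {f g : α → ℝ}

theorem integral_lt_integral_of_ae_lt [NeZero μ] (hf : Integrable f μ) (hg : Integrable g μ)
    (hfg : ∀ᵐ x ∂μ, f x < g x) : ∫ x, f x ∂μ < ∫ x, g x ∂μ := by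
  have hle : f ≤ᵐ[μ] g := hfg.mono fun _ hx => hx.le
  refine (integral_mono_ae hf hg hle).lt_of_ne fun heq => ?_
  obtain ⟨x, hlt, hx⟩ := (hfg.and ((integral_eq_iff_of_ae_le hf hg hle).1 heq)).exists
  exact hlt.ne hx

end MeasureTheory

namespace Real

theorem abs_one_sub_exp_neg_le_one {t : ℝ} (ht : 0 ≤ t) : |1 - exp (-t)| ≤ 1 := by
  have : exp (-t) ≤ 1 := exp_le_one_iff.2 (neg_nonpos.2 ht)
  rw [abs_le]
  constructor <;> linarith [exp_pos (-t)]

theorem exp_neg_sub_one_add_div_nonneg {t : ℝ} (ht : 0 ≤ t) : 0 ≤ (exp (-t) - 1 + t) / t :=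
  div_nonneg (by linarith [add_one_le_exp (-t)]) ht

theorem exp_neg_sub_one_add_div_lt {t : ℝ} (ht : 0 < t) :
    (exp (-t) - 1 + t) / t < 1 - exp (-t) := by
  have key : (1 + t) * exp (-t) < 1 := by
    rw [exp_neg, ← div_eq_mul_inv, div_lt_one (exp_pos t)]
    linarith [add_one_lt_exp ht.ne']
  rw [div_lt_iff₀ ht]
  linarith

theorem abs_exp_neg_sub_one_add_div_le_one {t : ℝ} (ht : 0 < t) :
    |(exp (-t) - 1 + t) / t| ≤ 1 := by
  rw [abs_of_nonneg (exp_neg_sub_one_add_div_nonneg ht.le)]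
  linarith [exp_neg_sub_one_add_div_lt ht, exp_pos (-t)]

end Real

/-- No finite nonzero measure `F` on `(0,∞)` has Bernstein transform
`Ŭ(s) = ∫ (1 - e^{-sx}) dF(x)` satisfying
`Ŭ(s) = (1/s) ∫ (e^{-sx} - 1 + sx)/x dF(x)` for all `s > 0`. -/
theorem stmt12 (F : Measure ℝ) [IsFiniteMeasure F] (hne : F ≠ 0)
    (hsupp : F (Set.Ioi (0:ℝ))ᶜ = 0) :
    ¬ (∀ s : ℝ, 0 < s →
        (∫ x, (1 - Real.exp (-s * x)) ∂F) =
          (1 / s) * ∫ x, (Real.exp (-s * x) - 1 + s * x) / x ∂F) := by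
  intro h
  have : NeZero F := ⟨hne⟩
  have hpos : ∀ᵐ x ∂F, 0 < x := mem_ae_iff.2 hsupp
  have h1 := h 1 one_pos
  simp only [neg_mul, one_mul, div_one] at h1
  have hf : Integrable (fun x => 1 - exp (-x)) F :=
    .of_bound (by fun_prop) 1 (hpos.mono fun _ hx => abs_one_sub_exp_neg_le_one hx.le)
  have hg : Integrable (fun x => (exp (-x) - 1 + x) / x) F :=
    .of_bound (by fun_prop : Measurable _).aestronglyMeasurable 1 (hpos.mono fun _ hx => abs_exp_neg_sub_one_add_div_le_one hx)
  exact (integral_lt_integral_of_ae_lt hg hf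
    (hpos.mono fun _ hx => exp_neg_sub_one_add_div_lt hx)).ne h1.symm
end

section
/- Let f = (f_i)_{i≥1} be a summable nonnegative sequence with ν₀ = ∑ f_i and β_i = ∑_{j≥i} f_j/(j+1). If f is an equilibrium of Model D, then β₁ = (ν₀ − ν₀²)/2 and for all i ≥ 1: (1 + 2ν₀)·f_i = 2β_i + ∑_{j=1}^{i−1} f_j·f_{i−j}. -/
/-!
Test the weak equilibrium equation against `φ ≡ 1` for the identity for `β₁`, and against the
indicator of `{i}` for the strong form at `i`. Bounded test functions make every series absolutely
convergent, so the coagulation term splits into a gain part, a convolution for the indicator,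
and a loss part `2 (∑ φ_i f_i) ν₀`.
-/

open Finset

noncomputable def coagForm (f φ : ℕ → ℝ) : ℝ :=
  ∑' i : ℕ, ∑' j : ℕ, (φ (i + j + 2) - φ (i + 1) - φ (j + 1)) * f (i + 1) * f (j + 1)

noncomputable def fragForm (f φ : ℕ → ℝ) : ℝ :=
  ∑' i : ℕ,
    (-(φ (i + 1)) + (2 / ((i : ℝ) + 2)) * ∑ j ∈ range (i + 1), φ (j + 1)) * f (i + 1)

/-- The paper's `β_i`. -/
noncomputable def tailMoment (f : ℕ → ℝ) (i : ℕ) : ℝ :=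
  ∑' k : ℕ, f (i + k) / ((i : ℝ) + k + 1)

section BoundedMultiplier

variable {ι : Type*} {c g : ι → ℝ} {M : ℝ}

theorem abs_mul_le_of_abs_le (hc : ∀ i, |c i| ≤ M) (i : ι) : |c i * g i| ≤ M * |g i| := by
  rw [abs_mul]; exact mul_le_mul_of_nonneg_right (hc i) (abs_nonneg _)

theorem Summable.mul_of_abs_le (hg : Summable g) (hc : ∀ i, |c i| ≤ M) :
    Summable fun i => c i * g i :=
  (hg.abs.mul_left M).of_norm_bounded (abs_mul_le_of_abs_le hc)

theorem abs_tsum_mul_le (hg : Summable g) (hc : ∀ i, |c i| ≤ M) :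
    |∑' i, c i * g i| ≤ ∑' i, M * |g i| :=
  Real.norm_eq_abs (∑' i, c i * g i) ▸
    tsum_of_norm_bounded (hg.abs.mul_left M).hasSum (abs_mul_le_of_abs_le hc)

end BoundedMultiplier

theorem abs_div_natCast_add_two_le_one {a : ℝ} (ha₀ : 0 ≤ a) (ha₂ : a ≤ 2) (i : ℕ) :
    |a / ((i : ℝ) + 2)| ≤ 1 := by
  rw [abs_of_nonneg (by positivity)]
  exact div_le_one_of_le₀ (by linarith [(i.cast_nonneg : (0 : ℝ) ≤ i)]) (by positivity)

section ModelD

variable {f : ℕ → ℝ}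

theorem tsum_ite_add_one_eq_mul {m : ℕ} (hm : 1 ≤ m) :
    ∑' i : ℕ, (if i + 1 = m then 1 else 0) * f (i + 1) = f m := by
  obtain ⟨k, rfl⟩ := Nat.exists_eq_add_of_le' hm
  simp

theorem coagForm_one : coagForm f (fun _ => 1) = -(∑' i, f (i + 1)) ^ 2 := by
  have hsummand : ∀ i j, ((1 : ℝ) - 1 - 1) * f (i + 1) * f (j + 1) = -(f (i + 1) * f (j + 1)) :=
    fun _ _ => by ring
  simp_rw [coagForm, hsummand, tsum_neg, tsum_mul_left, tsum_mul_right]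
  ring

theorem fragForm_one (hf : Summable fun i => f (i + 1)) :
    fragForm f (fun _ => 1) = ∑' i, f (i + 1) - 2 * tailMoment f 1 := by
  have hweighted : Summable fun i : ℕ => 1 / ((i : ℝ) + 2) * f (i + 1) :=
    hf.mul_of_abs_le (abs_div_natCast_add_two_le_one zero_le_one one_le_two)
  have htail : tailMoment f 1 = ∑' i : ℕ, 1 / ((i : ℝ) + 2) * f (i + 1) :=
    tsum_congr fun k => by rw [add_comm 1 k]; push_cast; ring
  rw [htail, ← tsum_mul_left, ← hf.tsum_sub (hweighted.mul_left 2)]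
  refine tsum_congr fun i => ?_
  simp only [sum_const, card_range, nsmul_eq_mul, mul_one]
  push_cast
  field_simp
  ring

theorem coagForm_eq_gain_sub_loss (hf : Summable fun i => f (i + 1)) {φ : ℕ → ℝ} {M : ℝ}
    (hφ : ∀ n, |φ n| ≤ M) :
    coagForm f φ = ∑' i, (∑' j, φ (i + j + 2) * f (j + 1)) * f (i + 1)
      - 2 * (∑' i, φ (i + 1) * f (i + 1)) * ∑' i, f (i + 1) := by
  set S := ∑' i, f (i + 1)
  set T := ∑' i, φ (i + 1) * f (i + 1)
  have hT : Summable fun i => φ (i + 1) * f (i + 1) := hf.mul_of_abs_le fun i => hφ (i + 1)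
  have hinner : ∀ i, ∑' j, (φ (i + j + 2) - φ (i + 1) - φ (j + 1)) * f (i + 1) * f (j + 1)
      = (∑' j, φ (i + j + 2) * f (j + 1)) * f (i + 1) - φ (i + 1) * f (i + 1) * S
        - f (i + 1) * T := by
    intro i
    have hgain : Summable fun j => φ (i + j + 2) * f (j + 1) := hf.mul_of_abs_le fun j => hφ _
    rw [← tsum_mul_right, ← tsum_mul_left, ← tsum_mul_left,
      ← (hgain.mul_right _).tsum_sub (hf.mul_left _),
      ← ((hgain.mul_right _).sub (hf.mul_left _)).tsum_sub (hT.mul_left _)]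
    exact tsum_congr fun j => by ring
  have hgain : Summable fun i => (∑' j, φ (i + j + 2) * f (j + 1)) * f (i + 1) :=
    hf.mul_of_abs_le fun i => abs_tsum_mul_le hf fun j => hφ _
  rw [coagForm, tsum_congr hinner, (hgain.sub (hT.mul_right S)).tsum_sub (hf.mul_right T),
    hgain.tsum_sub (hT.mul_right S), tsum_mul_right, tsum_mul_right]
  ring

theorem tsum_tsum_ite_add_two_eq_sum_Ico (m : ℕ) :
    ∑' i, (∑' j, (if i + j + 2 = m then 1 else 0) * f (j + 1)) * f (i + 1)
      = ∑ j ∈ Ico 1 m, f j * f (m - j) := by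
  have hinner : ∀ i, (∑' j, (if i + j + 2 = m then 1 else 0) * f (j + 1)) * f (i + 1)
      = if i ∈ range (m - 1) then f (i + 1) * f (m - (i + 1)) else 0 := by
    intro i
    by_cases hi : i ∈ range (m - 1)
    · obtain ⟨k, rfl⟩ : ∃ k, m = i + k + 2 := ⟨m - i - 2, by simp at hi; omega⟩
      rw [if_pos hi, tsum_eq_single k fun j hj => by simp [hj]]
      simp [show i + k + 2 - (i + 1) = k + 1 by omega, mul_comm]
    · rw [if_neg hi]
      simp at hi
      simp [show ∀ j, i + j + 2 ≠ m by omega]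
  rw [tsum_congr hinner, tsum_eq_sum fun i hi => if_neg hi, sum_ite_mem, inter_self,
    sum_Ico_eq_sum_range]
  simp only [add_comm 1]

theorem coagForm_single (hf : Summable fun i => f (i + 1)) {m : ℕ} (hm : 1 ≤ m) :
    coagForm f (fun n => if n = m then 1 else 0)
      = ∑ j ∈ Ico 1 m, f j * f (m - j) - 2 * f m * ∑' i, f (i + 1) := by
  rw [coagForm_eq_gain_sub_loss hf (M := 1) fun n => by split_ifs <;> simp,
    tsum_tsum_ite_add_two_eq_sum_Ico, tsum_ite_add_one_eq_mul hm]

theorem fragForm_single (hf : Summable fun i => f (i + 1)) {m : ℕ} (hm : 1 ≤ m) :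
    fragForm f (fun n => if n = m then 1 else 0) = -f m + 2 * tailMoment f m := by
  obtain ⟨k, rfl⟩ := Nat.exists_eq_add_of_le' hm
  set w : ℕ → ℝ := fun i => if k ≤ i then 2 / ((i : ℝ) + 2) else 0
  have hsummand : ∀ i, (-(if i + 1 = k + 1 then 1 else 0)
      + 2 / ((i : ℝ) + 2) * ∑ j ∈ range (i + 1), if j + 1 = k + 1 then 1 else 0) * f (i + 1)
      = -((if i + 1 = k + 1 then 1 else 0) * f (i + 1)) + w i * f (i + 1) := by
    intro i
    simp only [w, add_left_inj, sum_ite_eq', mem_range, Nat.lt_succ_iff]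
    split_ifs <;> ring
  have hw : Summable fun i => w i * f (i + 1) := hf.mul_of_abs_le (M := 1) fun i => by
    simp only [w]
    split_ifs
    · exact abs_div_natCast_add_two_le_one zero_le_two le_rfl i
    · simp
  rw [fragForm, tsum_congr hsummand, (hf.mul_of_abs_le (M := 1) ?_).neg.tsum_add hw, tsum_neg,
    tsum_ite_add_one_eq_mul hm, ← hw.sum_add_tsum_nat_add k, sum_eq_zero, zero_add, tailMoment,
    ← tsum_mul_left]
  · refine congrArg _ (tsum_congr fun n => ?_)
    simp only [w, le_add_iff_nonneg_left, zero_le, if_true]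
    rw [show n + k + 1 = k + 1 + n by omega]
    push_cast
    ring
  · exact fun i hi => by simp [w, not_le.mpr (mem_range.mp hi)]
  · exact fun i => by split_ifs <;> simp

end ModelD

theorem stmt15_general (f : ℕ → ℝ) (ν₀ : ℝ) (β : ℕ → ℝ)
    (hsum : Summable (fun i : ℕ => f (i + 1)))
    (hν : ν₀ = ∑' i : ℕ, f (i + 1))
    (hβ : ∀ i : ℕ, β i = ∑' k : ℕ, f (i + k) / ((i : ℝ) + k + 1))
    (hequil : ∀ φ : ℕ → ℝ, (∃ M : ℝ, ∀ i, |φ i| ≤ M) →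
      0 = (∑' i : ℕ, ∑' j : ℕ,
            (φ (i + j + 2) - φ (i + 1) - φ (j + 1)) * f (i + 1) * f (j + 1))
        + ∑' i : ℕ,
            (-(φ (i + 1)) +
              (2 / ((i : ℝ) + 2)) * ∑ j ∈ Finset.range (i + 1), φ (j + 1)) * f (i + 1)) :
    β 1 = (ν₀ - ν₀ ^ 2) / 2 ∧
    ∀ i : ℕ, 1 ≤ i →
      (1 + 2 * ν₀) * f i = 2 * β i + ∑ j ∈ Finset.Ico 1 i, f j * f (i - j) := by
  have hβ' : ∀ i, β i = tailMoment f i := hβ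
  have hweak : ∀ φ : ℕ → ℝ, (∃ M, ∀ n, |φ n| ≤ M) → 0 = coagForm f φ + fragForm f φ :=
    hequil
  refine ⟨?_, fun m hm => ?_⟩
  · have h := hweak (fun _ => 1) ⟨1, fun _ => by simp⟩
    rw [coagForm_one, fragForm_one hsum, ← hν, ← hβ'] at h
    linarith
  · have h := hweak (fun n => if n = m then 1 else 0) ⟨1, fun n => by split_ifs <;> simp⟩
    rw [coagForm_single hsum hm, fragForm_single hsum hm, ← hν, ← hβ'] at h
    linarith

/-- If the summable nonnegative sequence `(f_i)_{i≥1}` is an equilibrium of Model D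
(in weak form: for every bounded test sequence `φ`, the weak coagulation-fragmentation
form vanishes), then with `ν₀ = ∑_{i≥1} f_i` and `β_i = ∑_{j≥i} f_j/(j+1)` we have
`β₁ = (ν₀ - ν₀²)/2` and `(1+2ν₀) f_i = 2 β_i + ∑_{j=1}^{i-1} f_j f_{i-j}` for all `i ≥ 1`. -/
theorem stmt15 (f : ℕ → ℝ) (ν₀ : ℝ) (β : ℕ → ℝ)
    (hpos : ∀ i, 0 ≤ f i)
    (hsum : Summable (fun i : ℕ => f (i + 1)))
    (hν : ν₀ = ∑' i : ℕ, f (i + 1))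
    (hβ : ∀ i : ℕ, β i = ∑' k : ℕ, f (i + k) / ((i : ℝ) + k + 1))
    (hequil : ∀ φ : ℕ → ℝ, (∃ M : ℝ, ∀ i, |φ i| ≤ M) →
      0 = (∑' i : ℕ, ∑' j : ℕ,
            (φ (i + j + 2) - φ (i + 1) - φ (j + 1)) * f (i + 1) * f (j + 1))
        + ∑' i : ℕ,
            (-(φ (i + 1)) +
              (2 / ((i : ℝ) + 2)) * ∑ j ∈ Finset.range (i + 1), φ (j + 1)) * f (i + 1)) :
    β 1 = (ν₀ - ν₀ ^ 2) / 2 ∧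
    ∀ i : ℕ, 1 ≤ i →
      (1 + 2 * ν₀) * f i = 2 * β i + ∑ j ∈ Finset.Ico 1 i, f j * f (i - j) :=
  stmt15_general f ν₀ β hsum hν hβ hequil
end
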